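/- arXiv:1302.7309 — 3 statements merged into one kernel-verified Lean document; each statement's English description precedes it below -/
import Mathlib

section
/- Kummer's transformation: M(a,b,z) = e^z · M(b−a, b, −z) for all complex z and parameters a, b with b not a nonpositive integer. -/
/-!
Multiply the two absolutely convergent series `M(b-a,b,-z)` and `e^z = ∑ z^n/n!` (Cauchy
product). The coefficient of `z^n` is `∑_{i+j=n} (-1)^i (b-a)_i / ((b)_i i! j!)`; multiplying by
`(b)_n n!` and using `(b)_n = (b)_i (b+i)_j` turns it into
`∑_{i+j=n} C(n,i) (a-b)(a-b-1)⋯(a-b-i+1) (b+i)_j`, and this equals `(a)_n` by a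
Chu–Vandermonde identity mixing falling and rising factorials, proved by induction on `n` via
Pascal's rule.
The series converge for every `z` by the ratio test: consecutive terms differ by the factor
`z (a+n) / ((b+n)(n+1)) → 0`.
-/

/-- The Pochhammer symbol (rising factorial) for complex arguments. -/
noncomputable def risingC (a : ℂ) (n : ℕ) : ℂ := ∏ i ∈ Finset.range n, (a + i)

/-- Kummer's confluent hypergeometric function of the first kind,
`M(a,b,z) = Σ_{n≥0} (a)_n/((b)_n n!) z^n`. -/
noncomputable def kummerM (a b z : ℂ) : ℂ :=
  ∑' n : ℕ, risingC a n / (risingC b n * n.factorial) * z ^ n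

open Finset Polynomial Filter Topology
open scoped Nat

theorem risingC_eq_ascPochhammer_eval (a : ℂ) (n : ℕ) :
    risingC a n = (ascPochhammer ℂ n).eval a := by
  induction n with
  | zero => simp [risingC]
  | succ n ih => rw [risingC, prod_range_succ, ← risingC, ih, ascPochhammer_succ_eval]

theorem ascPochhammer_eval_mul_eval_add {S : Type*} [CommSemiring S] (n m : ℕ) (b : S) :
    (ascPochhammer S n).eval b * (ascPochhammer S m).eval (b + n) =
      (ascPochhammer S (n + m)).eval b := by
  simp [← ascPochhammer_mul]

theorem ascPochhammer_eval_ne_zero {R : Type*} [CommRing R] [IsDomain R] {b : R}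
    (hb : ∀ n : ℕ, b ≠ -(n : R)) (n : ℕ) : (ascPochhammer R n).eval b ≠ 0 := by
  rw [Ne, ascPochhammer_eval_eq_zero_iff]
  rintro ⟨k, -, hk⟩
  exact hb k (by rw [hk, neg_neg])

theorem ascPochhammer_eval_add_eq_sum_descPochhammer {R : Type*} [CommRing R] (n : ℕ) :
    ∀ x y : R, (ascPochhammer R n).eval (x + y) = ∑ ij ∈ antidiagonal n,
      (n.choose ij.1 : R) *
        ((descPochhammer R ij.1).eval x * (ascPochhammer R ij.2).eval (y + ij.1)) := by
  induction n with
  | zero => simp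
  | succ n ih =>
    intro x y
    rw [sum_antidiagonal_choose_succ_mul
      fun i j => (descPochhammer R i).eval x * (ascPochhammer R j).eval (y + i)]
    have raise_rising : ∑ ij ∈ antidiagonal n, (n.choose ij.1 : R) *
        ((descPochhammer R ij.1).eval x * (ascPochhammer R (ij.2 + 1)).eval (y + ij.1)) =
        (ascPochhammer R n).eval (x + y) * (y + n) := by
      rw [ih x y, sum_mul]
      refine sum_congr rfl fun ij hij => ?_
      rw [ascPochhammer_succ_eval, ← mem_antidiagonal.mp hij]
      push_cast
      ring
    have raise_falling : ∑ ij ∈ antidiagonal n, (n.choose ij.2 : R) *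
        ((descPochhammer R (ij.1 + 1)).eval x *
          (ascPochhammer R ij.2).eval (y + (ij.1 + 1 : ℕ))) =
        x * (ascPochhammer R n).eval (x + y) := by
      rw [show x + y = (x - 1) + (y + 1) by ring, ih, mul_sum]
      refine sum_congr rfl fun ij hij => ?_
      rw [Nat.choose_symm_of_eq_add (mem_antidiagonal.mp hij).symm, descPochhammer_succ_left]
      simp only [eval_mul, eval_X, eval_comp, eval_sub, eval_one]
      push_cast
      rw [← add_assoc, add_right_comm y]
      ring
    rw [raise_rising, raise_falling, ascPochhammer_succ_eval]
    ring

theorem sum_antidiagonal_kummer_coeff {K : Type*} [Field K] [CharZero K] {b : K}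
    (hb : ∀ n : ℕ, b ≠ -(n : K)) (a : K) (n : ℕ) :
    ∑ ij ∈ antidiagonal n, (-1) ^ ij.1 * (ascPochhammer K ij.1).eval (b - a) /
        ((ascPochhammer K ij.1).eval b * ij.1 ! * ij.2 !) =
      (ascPochhammer K n).eval a / ((ascPochhammer K n).eval b * n !) := by
  conv_rhs => rw [← sub_add_cancel a b, ascPochhammer_eval_add_eq_sum_descPochhammer, sum_div]
  refine sum_congr rfl fun ⟨i, j⟩ hij => ?_
  obtain rfl : i + j = n := mem_antidiagonal.mp hij
  have falling_eq : (-1) ^ i * (ascPochhammer K i).eval (b - a) =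
      (descPochhammer K i).eval (a - b) := by
    rw [← neg_sub, ascPochhammer_eval_neg_eq_descPochhammer, ← mul_assoc, ← mul_pow]
    simp
  have rising_split := ascPochhammer_eval_mul_eval_add i j b
  have factorial_split : ((i + j).choose i * i ! * j ! : K) = (i + j)! := by
    have := Nat.choose_mul_factorial_mul_factorial (Nat.le_add_right i j)
    rw [Nat.add_sub_cancel_left] at this
    exact_mod_cast this
  have hi := ascPochhammer_eval_ne_zero hb i
  have hj : (ascPochhammer K j).eval (b + i) ≠ 0 :=
    right_ne_zero_of_mul (rising_split ▸ ascPochhammer_eval_ne_zero hb (i + j))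
  have hchoose : ((i + j).choose i : K) ≠ 0 := by
    exact_mod_cast (Nat.choose_pos (Nat.le_add_right i j)).ne'
  rw [falling_eq, ← rising_split, ← factorial_split]
  field_simp

theorem summable_norm_of_succ_eq_mul {R : Type*} [SeminormedRing R] {F q : ℕ → R}
    (hq : Tendsto q atTop (𝓝 0)) (hF : ∀ n, F (n + 1) = q n * F n) :
    Summable fun n => ‖F n‖ := by
  refine summable_of_ratio_norm_eventually_le (r := 1 / 2) (by norm_num) ?_
  filter_upwards [(tendsto_order.1 hq.norm).2 (1 / 2) (by norm_num)] with n hn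
  rw [norm_norm, norm_norm, hF]
  exact (norm_mul_le _ _).trans (mul_le_mul_of_nonneg_right hn.le (norm_nonneg _))

theorem summable_norm_kummer_term (a b z : ℂ) :
    Summable fun n : ℕ =>
      ‖(ascPochhammer ℂ n).eval a / ((ascPochhammer ℂ n).eval b * n !) * z ^ n‖ := by
  refine summable_norm_of_succ_eq_mul
    (q := fun n : ℕ => z * ((a + 1 * n) / (b + 1 * n)) * (1 / ((n : ℂ) + 1))) ?_ fun n => ?_
  · simpa using ((tendsto_add_mul_div_add_mul_atTop_nhds a b 1 one_ne_zero).const_mul z).mul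
      tendsto_one_div_add_atTop_nhds_zero_nat
  · simp only [ascPochhammer_succ_eval, Nat.factorial_succ, Nat.cast_mul, pow_succ]
    push_cast
    simp only [div_eq_mul_inv, mul_inv]
    ring

/-- Kummer's transformation: `M(a,b,z) = e^z M(b−a,b,−z)` whenever `b` is not a
nonpositive integer. -/
theorem kummer_transformation (a b z : ℂ) (hb : ∀ n : ℕ, b ≠ -(n : ℂ)) :
    kummerM a b z = Complex.exp z * kummerM (b - a) b (-z) := by
  simp only [kummerM, risingC_eq_ascPochhammer_eval]
  rw [Complex.exp_eq_exp_ℂ, NormedSpace.exp_eq_tsum_div, mul_comm,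
    tsum_mul_tsum_eq_tsum_sum_antidiagonal_of_summable_norm (summable_norm_kummer_term _ _ _)
      (NormedSpace.norm_expSeries_div_summable z)]
  refine tsum_congr fun n => ?_
  rw [← sum_antidiagonal_kummer_coeff hb, sum_mul]
  refine sum_congr rfl fun ⟨i, j⟩ hij => ?_
  rw [← mem_antidiagonal.mp hij, pow_add, neg_pow]
  ring
end

section
/- Addition theorem for Kummer's function: M(a,b,x+y) = Σ_{n≥0} ((a)_n y^n)/((b)_n n!) · M(a+n, b+n, x), with absolute convergence for all complex x, y when b is not a nonpositive integer. -/
open Finset Filter Nat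

section Antidiagonal

variable {A : Type*} [AddCommMonoid A] [HasAntidiagonal A]

theorem summable_of_summable_sum_antidiagonal_of_nonneg {f : A × A → ℝ} (hf : 0 ≤ f)
    (h : Summable fun n => ∑ p ∈ antidiagonal n, f p) : Summable f := by
  rw [← HasAntidiagonal.sigmaAntidiagonalEquivProd.summable_iff]
  refine (summable_sigma_of_nonneg fun _ => hf _).2 ⟨fun n => (hasSum_fintype _).summable, ?_⟩
  simpa only [Function.comp_apply, HasAntidiagonal.sigmaAntidiagonalEquivProd_apply,
    Finset.tsum_subtype] using h

theorem Summable.tsum_sum_antidiagonal {α : Type*} [AddCommMonoid α] [TopologicalSpace α]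
    [ContinuousAdd α] [T3Space α] {f : A × A → α} (hf : Summable f) :
    ∑' n, ∑ p ∈ antidiagonal n, f p = ∑' p, f p := by
  rw [← HasAntidiagonal.sigmaAntidiagonalEquivProd.tsum_eq]
  refine Eq.trans ?_ ((HasAntidiagonal.sigmaAntidiagonalEquivProd.summable_iff.2 hf).tsum_sigma'
    fun n => (hasSum_fintype _).summable).symm
  simp only [Function.comp_apply, HasAntidiagonal.sigmaAntidiagonalEquivProd_apply,
    Finset.tsum_subtype]

end Antidiagonal

theorem sum_antidiagonal_choose_mul_pow_mul_pow {R : Type*} [CommSemiring R] (g : ℕ → R)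
    (u v : R) (k : ℕ) :
    ∑ p ∈ antidiagonal k, ((p.1 + p.2).choose p.1 : R) * g (p.1 + p.2) * u ^ p.1 * v ^ p.2 =
      g k * (u + v) ^ k := by
  rw [(Commute.all u v).add_pow', mul_sum]
  refine sum_congr rfl fun p hp => ?_
  rw [mem_antidiagonal.1 hp, nsmul_eq_mul]
  ring

theorem risingC_add (a : ℂ) (n m : ℕ) :
    risingC a (n + m) = risingC a n * risingC (a + n) m := by
  rw [risingC, risingC, risingC, prod_range_add]
  congr 1
  refine prod_congr rfl fun i _ => ?_
  push_cast
  ring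

theorem risingC_ne_zero {b : ℂ} (hb : ∀ n : ℕ, b ≠ -(n : ℂ)) (n : ℕ) : risingC b n ≠ 0 :=
  prod_ne_zero_iff.2 fun i _ h => hb i (eq_neg_of_add_eq_zero_left h)

theorem exists_pos_le_norm_add_natCast {b : ℂ} (hb : ∀ n : ℕ, b ≠ -(n : ℂ)) :
    ∃ δ > 0, ∀ i : ℕ, δ ≤ ‖b + i‖ := by
  have hlower (i : ℕ) : (i : ℝ) - ‖b‖ ≤ ‖b + i‖ := by
    simpa [add_comm] using norm_sub_norm_le (i : ℂ) (-b)
  have htend : Tendsto (fun i : ℕ => ‖b + i‖) cofinite atTop := by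
    rw [Nat.cofinite_eq_atTop]
    exact tendsto_atTop_mono hlower (tendsto_atTop_add_const_right _ _ tendsto_natCast_atTop_atTop)
  obtain ⟨i₀, hi₀⟩ := htend.exists_forall_le
  exact ⟨‖b + i₀‖, norm_pos_iff.2 fun h => hb i₀ (eq_neg_of_add_eq_zero_left h), hi₀⟩

noncomputable def kummerCoeff (a b : ℂ) (n : ℕ) : ℂ := risingC a n / (risingC b n * n !)

theorem kummerM_eq_tsum (a b z : ℂ) : kummerM a b z = ∑' n, kummerCoeff a b n * z ^ n := rfl

theorem exists_norm_add_natCast_le_mul (a : ℂ) {b : ℂ} (hb : ∀ n : ℕ, b ≠ -(n : ℂ)) :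
    ∃ A : ℝ, ∀ i : ℕ, ‖a + i‖ ≤ A * ‖b + i‖ := by
  obtain ⟨δ, hδ, hbδ⟩ := exists_pos_le_norm_add_natCast hb
  refine ⟨‖a - b‖ / δ + 1, fun i => ?_⟩
  calc ‖a + i‖ = ‖(a - b) + (b + i)‖ := by ring_nf
    _ ≤ ‖a - b‖ + ‖b + i‖ := norm_add_le _ _
    _ ≤ ‖a - b‖ / δ * ‖b + i‖ + ‖b + i‖ := by
      gcongr
      calc ‖a - b‖ = ‖a - b‖ / δ * δ := (div_mul_cancel₀ _ hδ.ne').symm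
        _ ≤ ‖a - b‖ / δ * ‖b + i‖ := by gcongr; exact hbδ i
    _ = (‖a - b‖ / δ + 1) * ‖b + i‖ := by ring

theorem norm_risingC_le_pow_mul {a b : ℂ} {A : ℝ} (h : ∀ i : ℕ, ‖a + i‖ ≤ A * ‖b + i‖)
    (k : ℕ) : ‖risingC a k‖ ≤ A ^ k * ‖risingC b k‖ := by
  rw [risingC, risingC, norm_prod, norm_prod]
  calc ∏ i ∈ range k, ‖a + i‖ ≤ ∏ i ∈ range k, (A * ‖b + i‖) :=
        prod_le_prod (fun _ _ => norm_nonneg _) fun i _ => h i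
    _ = A ^ k * ∏ i ∈ range k, ‖b + i‖ := by rw [prod_mul_distrib, prod_const, card_range]

theorem exists_norm_kummerCoeff_le (a : ℂ) {b : ℂ} (hb : ∀ n : ℕ, b ≠ -(n : ℂ)) :
    ∃ A : ℝ, ∀ k, ‖kummerCoeff a b k‖ ≤ A ^ k / k ! := by
  obtain ⟨A, hA⟩ := exists_norm_add_natCast_le_mul a hb
  refine ⟨A, fun k => ?_⟩
  have hbk : 0 < ‖risingC b k‖ := norm_pos_iff.2 (risingC_ne_zero hb k)
  rw [kummerCoeff, norm_div, norm_mul, Complex.norm_natCast, ← div_div,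
    div_le_div_iff_of_pos_right (by positivity), div_le_iff₀ hbk]
  exact norm_risingC_le_pow_mul hA k

theorem summable_norm_kummerCoeff_mul_pow (a : ℂ) {b : ℂ} (hb : ∀ n : ℕ, b ≠ -(n : ℂ))
    {r : ℝ} (hr : 0 ≤ r) : Summable fun k => ‖kummerCoeff a b k‖ * r ^ k := by
  obtain ⟨A, hA⟩ := exists_norm_kummerCoeff_le a hb
  refine (Real.summable_pow_div_factorial (A * r)).of_nonneg_of_le (fun k => by positivity)
    fun k => ?_
  rw [mul_pow, mul_div_right_comm]
  exact mul_le_mul_of_nonneg_right (hA k) (pow_nonneg hr k)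

theorem kummerCoeff_mul_kummerCoeff_add (a : ℂ) {b : ℂ} (hb : ∀ n : ℕ, b ≠ -(n : ℂ))
    (n m : ℕ) :
    kummerCoeff a b n * kummerCoeff (a + n) (b + n) m =
      (n + m).choose n * kummerCoeff a b (n + m) := by
  have hbn (i : ℕ) : b + n ≠ -(i : ℂ) := fun h => hb (n + i) (by push_cast; linear_combination h)
  have hfact : ((n + m)! : ℂ) = (n + m).choose n * n ! * m ! := by
    rw [choose_symm_add]
    exact_mod_cast (add_choose_mul_factorial_mul_factorial n m).symm
  have hb_n := risingC_ne_zero hb n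
  have hbn_m := risingC_ne_zero hbn m
  have hchoose : ((n + m).choose n : ℂ) ≠ 0 := cast_ne_zero.2 (choose_pos (le_add_right n m)).ne'
  simp only [kummerCoeff, risingC_add, hfact]
  field_simp

/-- Addition theorem for Kummer's function:
`M(a,b,x+y) = Σ_{n≥0} ((a)_n y^n)/((b)_n n!) · M(a+n, b+n, x)`, with absolute
convergence, whenever `b` is not a nonpositive integer. -/
theorem kummer_addition (a b x y : ℂ) (hb : ∀ n : ℕ, b ≠ -(n : ℂ)) :
    (Summable fun n : ℕ =>
      ‖risingC a n * y ^ n / (risingC b n * n.factorial) * kummerM (a + n) (b + n) x‖) ∧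
    kummerM a b (x + y) =
      ∑' n : ℕ, risingC a n * y ^ n / (risingC b n * n.factorial) *
        kummerM (a + n) (b + n) x := by
  set F : ℕ × ℕ → ℂ := fun p =>
    kummerCoeff a b p.1 * y ^ p.1 * (kummerCoeff (a + p.1) (b + p.1) p.2 * x ^ p.2)
  have hF (p : ℕ × ℕ) :
      F p = (p.1 + p.2).choose p.1 * kummerCoeff a b (p.1 + p.2) * y ^ p.1 * x ^ p.2 := by
    rw [← kummerCoeff_mul_kummerCoeff_add a hb]
    ring
  have hrow (n : ℕ) : risingC a n * y ^ n / (risingC b n * n !) * kummerM (a + n) (b + n) x =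
      ∑' m, F (n, m) := by
    rw [kummerM_eq_tsum, ← tsum_mul_left, mul_div_right_comm]
    rfl
  have hFnorm : Summable fun p => ‖F p‖ := by
    refine summable_of_summable_sum_antidiagonal_of_nonneg (fun _ => norm_nonneg _) ?_
    simpa only [hF, norm_mul, norm_pow, Complex.norm_natCast,
      sum_antidiagonal_choose_mul_pow_mul_pow fun k => ‖kummerCoeff a b k‖] using
      summable_norm_kummerCoeff_mul_pow a hb (add_nonneg (norm_nonneg y) (norm_nonneg x))
  have hFsum := hFnorm.of_norm
  refine ⟨?_, ?_⟩
  · simp only [hrow]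
    exact hFnorm.prod.of_nonneg_of_le (fun _ => norm_nonneg _)
      fun n => norm_tsum_le_tsum_norm (hFnorm.prod_factor n)
  · calc kummerM a b (x + y) = ∑' k, ∑ p ∈ antidiagonal k, F p := by
          simp only [kummerM_eq_tsum, hF,
            sum_antidiagonal_choose_mul_pow_mul_pow (kummerCoeff a b), add_comm x y]
      _ = ∑' p, F p := hFsum.tsum_sum_antidiagonal
      _ = ∑' n, ∑' m, F (n, m) := hFsum.tsum_prod
      _ = _ := by simp only [hrow]
end

section
/- With C_{2n} = (2^{2n} n!/(2n)!) b^n and C_{2n+1} = m b^n/(2^n n!), the series y(r) = Σ_{n≥0} C_{2n} r^{2n} + Σ_{n≥0} C_{2n+1} r^{2n+1} satisfies y(r) = 1 + √π · w e^{w²} erf(w) + m r e^{br²/2} with w = √(b/2) r, and in particular y(r) > (1 + m r) e^{br²/2} for r > 0 when m ≥ 0, b > 0... specifically the odd part equals m r e^{br²/2}. -/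
/-!
Substituting `s = t u` in `erf` gives `√π t e^{t²} erf t = 2x ∫₀¹ e^{x(1-u²)} du` with `x = t²`.
Expanding the exponential and integrating termwise, the Wallis-type integrals
`∫₀¹ (1-u²)ⁿ du = 4ⁿ n!² / (2n+1)!` turn this into `∑_{n ≥ 1} 4ⁿ n! / (2n)! · xⁿ`.
The odd part is `m r` times the exponential series, and the inequality compares coefficients:
`(2n)! ≤ 4ⁿ n!²` because the central binomial coefficient is at most `4ⁿ`, strictly so at `n = 1`.
-/

noncomputable def erf (x : ℝ) : ℝ :=
  (2 / Real.sqrt Real.pi) * ∫ t in (0 : ℝ)..x, Real.exp (-t ^ 2)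

open Real Nat intervalIntegral

lemma hasSum_exp (x : ℝ) : HasSum (fun n : ℕ => x ^ n / n !) (exp x) :=
  exp_eq_exp_ℝ ▸ NormedSpace.expSeries_div_hasSum_exp x

lemma integral_one_sub_sq_pow_succ (n : ℕ) :
    (2 * n + 3 : ℝ) * ∫ u in (0 : ℝ)..1, (1 - u ^ 2) ^ (n + 1) =
      (2 * n + 2) * ∫ u in (0 : ℝ)..1, (1 - u ^ 2) ^ n := by
  have hderiv (u : ℝ) : HasDerivAt (fun u : ℝ => u * (1 - u ^ 2) ^ (n + 1))
      ((2 * n + 3) * (1 - u ^ 2) ^ (n + 1) - (2 * n + 2) * (1 - u ^ 2) ^ n) u := by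
    have hsq : HasDerivAt (fun u : ℝ => 1 - u ^ 2) (-(2 * u)) u := by
      simpa using (hasDerivAt_pow 2 u).const_sub 1
    refine ((hasDerivAt_id' u).fun_mul (hsq.fun_pow (n + 1))).congr_deriv ?_
    push_cast
    ring
  have hftc := integral_eq_sub_of_hasDerivAt (fun u _ => hderiv u)
    ((Continuous.intervalIntegrable (by fun_prop) 0 1))
  rw [integral_sub (Continuous.intervalIntegrable (by fun_prop) 0 1)
    (Continuous.intervalIntegrable (by fun_prop) 0 1), integral_const_mul, integral_const_mul] at hftc
  norm_num at hftc
  linarith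

lemma integral_one_sub_sq_pow (n : ℕ) :
    ∫ u in (0 : ℝ)..1, (1 - u ^ 2) ^ n = 2 ^ (2 * n) * (n ! : ℝ) ^ 2 / (2 * n + 1)! := by
  induction n with
  | zero => simp
  | succ n ih =>
    rw [← mul_right_inj' (show (2 * n + 3 : ℝ) ≠ 0 by positivity), integral_one_sub_sq_pow_succ, ih,
      show 2 * (n + 1) + 1 = 2 * n + 1 + 1 + 1 by ring, Nat.factorial_succ (2 * n + 1 + 1),
      Nat.factorial_succ (2 * n + 1), Nat.factorial_succ n]
    push_cast
    field_simp
    ring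

lemma hasSum_integral_exp_mul_one_sub_sq (x : ℝ) :
    HasSum (fun n : ℕ => x ^ n / n ! * ∫ u in (0 : ℝ)..1, (1 - u ^ 2) ^ n)
      (∫ u in (0 : ℝ)..1, exp (x * (1 - u ^ 2))) := by
  have hbound (n : ℕ) (u : ℝ) (hu : u ∈ Set.uIoc (0 : ℝ) 1) :
      ‖(x * (1 - u ^ 2)) ^ n / (n ! : ℝ)‖ ≤ |x| ^ n / n ! := by
    rw [Set.uIoc_of_le zero_le_one] at hu
    have h0 : 0 ≤ 1 - u ^ 2 := by nlinarith [hu.1, hu.2]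
    have h1 : 1 - u ^ 2 ≤ 1 := by nlinarith
    rw [norm_div, norm_pow, norm_mul, Real.norm_of_nonneg h0, Real.norm_natCast, Real.norm_eq_abs]
    gcongr
    exact mul_le_of_le_one_right (abs_nonneg x) h1
  have h := hasSum_integral_of_dominated_convergence (μ := MeasureTheory.volume) (a := 0) (b := 1)
    (F := fun n u => (x * (1 - u ^ 2)) ^ n / n !) (fun n _ => |x| ^ n / n !)
    (fun n => by fun_prop) (fun n => .of_forall (hbound n))
    (.of_forall fun _ _ => Real.summable_pow_div_factorial |x|)
    intervalIntegrable_const (.of_forall fun u _ => hasSum_exp _)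
  simpa only [mul_pow, mul_div_right_comm, integral_const_mul] using h

lemma hasSum_even_series (x : ℝ) :
    HasSum (fun n : ℕ => (2 : ℝ) ^ (2 * n) * n ! / (2 * n)! * x ^ n)
      (1 + 2 * x * ∫ u in (0 : ℝ)..1, exp (x * (1 - u ^ 2))) := by
  have hcoeff (n : ℕ) : 2 * x * (x ^ n / n ! * ∫ u in (0 : ℝ)..1, (1 - u ^ 2) ^ n) =
      (2 : ℝ) ^ (2 * (n + 1)) * (n + 1)! / (2 * (n + 1))! * x ^ (n + 1) := by
    rw [integral_one_sub_sq_pow, show 2 * (n + 1) = 2 * n + 1 + 1 by ring,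
      Nat.factorial_succ (2 * n + 1), Nat.factorial_succ n]
    push_cast
    field_simp
    ring
  have h := (hasSum_integral_exp_mul_one_sub_sq x).mul_left (2 * x)
  simp only [hcoeff] at h
  have h' := (hasSum_nat_add_iff (f := fun n => (2 : ℝ) ^ (2 * n) * n ! / (2 * n)! * x ^ n) 1).mp h
  simpa [add_comm] using h'

lemma sqrt_pi_mul_mul_exp_sq_mul_erf (t : ℝ) :
    √π * t * exp (t ^ 2) * erf t = 2 * t ^ 2 * ∫ u in (0 : ℝ)..1, exp (t ^ 2 * (1 - u ^ 2)) := by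
  have hsub : ∫ s in (0 : ℝ)..t, exp (-s ^ 2) = t * ∫ u in (0 : ℝ)..1, exp (-(t * u) ^ 2) := by
    simpa using (smul_integral_comp_mul_left (fun s => exp (-s ^ 2)) t (a := 0) (b := 1)).symm
  have hexp : ∫ u in (0 : ℝ)..1, exp (t ^ 2 * (1 - u ^ 2)) =
      exp (t ^ 2) * ∫ u in (0 : ℝ)..1, exp (-(t * u) ^ 2) := by
    rw [← integral_const_mul]
    congr 1 with u
    rw [← exp_add]
    ring_nf
  rw [erf, hsub, hexp]
  field_simp

lemma factorial_two_mul_le_four_pow_mul (n : ℕ) : (2 * n)! ≤ 4 ^ n * (n ! * n !) := by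
  calc (2 * n)! = centralBinom n * (n ! * n !) := by
        rw [centralBinom_eq_two_mul_choose, two_mul, ← mul_assoc, add_choose_mul_factorial_mul_factorial]
    _ ≤ 4 ^ n * (n ! * n !) := Nat.mul_le_mul_right _ (centralBinom_le_four_pow n)

lemma exp_lt_tsum_even_series {x : ℝ} (hx : 0 < x) :
    exp x < ∑' n : ℕ, (2 : ℝ) ^ (2 * n) * n ! / (2 * n)! * x ^ n := by
  refine hasSum_lt (fun n => ?_) ?_ (hasSum_exp x) (hasSum_even_series x).summable.hasSum (i := 1)
  · have h : ((2 * n)! : ℝ) ≤ 2 ^ (2 * n) * (n ! * n !) := by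
      rw [pow_mul]; exact_mod_cast factorial_two_mul_le_four_pow_mul n
    have hcoeff : 1 / (n ! : ℝ) ≤ 2 ^ (2 * n) * n ! / (2 * n)! := by
      rw [div_le_div_iff₀ (by positivity) (by positivity)]
      linarith
    calc x ^ n / n ! = 1 / n ! * x ^ n := by ring
      _ ≤ _ := by gcongr
  · norm_num
    linarith

theorem series_eq_erf_form_general (b m r : ℝ) (hb : 0 < b) :
    (∑' n : ℕ, ((2 : ℝ) ^ (2 * n) * n.factorial / (2 * n).factorial) * (b * r ^ 2 / 2) ^ n)
        + (∑' n : ℕ, (m * r / n.factorial) * (b * r ^ 2 / 2) ^ n)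
      = 1 + Real.sqrt Real.pi * (Real.sqrt (b / 2) * r) *
            Real.exp ((Real.sqrt (b / 2) * r) ^ 2) * erf (Real.sqrt (b / 2) * r)
          + m * r * Real.exp (b * r ^ 2 / 2) ∧
    (∑' n : ℕ, (m * r / n.factorial) * (b * r ^ 2 / 2) ^ n)
      = m * r * Real.exp (b * r ^ 2 / 2) ∧
    (0 < r →
      (∑' n : ℕ, ((2 : ℝ) ^ (2 * n) * n.factorial / (2 * n).factorial) * (b * r ^ 2 / 2) ^ n)
          + (∑' n : ℕ, (m * r / n.factorial) * (b * r ^ 2 / 2) ^ n)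
        > (1 + m * r) * Real.exp (b * r ^ 2 / 2)) := by
  set x := b * r ^ 2 / 2
  have hw : (√(b / 2) * r) ^ 2 = x := by
    rw [mul_pow, sq_sqrt (by positivity)]
    ring
  have heven : ∑' n : ℕ, (2 : ℝ) ^ (2 * n) * n ! / (2 * n)! * x ^ n =
      1 + √π * (√(b / 2) * r) * exp ((√(b / 2) * r) ^ 2) * erf (√(b / 2) * r) := by
    rw [(hasSum_even_series x).tsum_eq, sqrt_pi_mul_mul_exp_sq_mul_erf, hw]
  have hodd : ∑' n : ℕ, m * r / n ! * x ^ n = m * r * exp x := by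
    rw [← ((hasSum_exp x).mul_left (m * r)).tsum_eq]
    exact tsum_congr fun n => by ring
  refine ⟨by rw [heven, hodd], hodd, fun hr => ?_⟩
  have hlt := exp_lt_tsum_even_series (show 0 < x by positivity)
  rw [hodd]
  linarith

/-- With `C_{2n} r^{2n} = (2^{2n} n!/(2n)!) (br²/2)^n` and
`C_{2n+1} r^{2n+1} = m r (br²/2)^n/n!`, the series
`y(r) = Σ C_{2n} r^{2n} + Σ C_{2n+1} r^{2n+1}` satisfies
`y(r) = 1 + √π w e^{w²} erf(w) + m r e^{br²/2}` with `w = √(b/2) r`, and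
`y(r) > (1 + m r) e^{br²/2}` for `r > 0`; in particular the odd part equals
`m r e^{br²/2}`. -/
theorem series_eq_erf_form (b m r : ℝ) (hb : 0 < b) (hm : 0 ≤ m) :
    (∑' n : ℕ, ((2 : ℝ) ^ (2 * n) * n.factorial / (2 * n).factorial) * (b * r ^ 2 / 2) ^ n)
        + (∑' n : ℕ, (m * r / n.factorial) * (b * r ^ 2 / 2) ^ n)
      = 1 + Real.sqrt Real.pi * (Real.sqrt (b / 2) * r) *
            Real.exp ((Real.sqrt (b / 2) * r) ^ 2) * erf (Real.sqrt (b / 2) * r)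
          + m * r * Real.exp (b * r ^ 2 / 2) ∧
    (∑' n : ℕ, (m * r / n.factorial) * (b * r ^ 2 / 2) ^ n)
      = m * r * Real.exp (b * r ^ 2 / 2) ∧
    (0 < r →
      (∑' n : ℕ, ((2 : ℝ) ^ (2 * n) * n.factorial / (2 * n).factorial) * (b * r ^ 2 / 2) ^ n)
          + (∑' n : ℕ, (m * r / n.factorial) * (b * r ^ 2 / 2) ^ n)
        > (1 + m * r) * Real.exp (b * r ^ 2 / 2)) :=
  series_eq_erf_form_general b m r hb
end
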